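/- Set Δ̃₁ = d̃₁ + d̃ₒ − d̃₋ − d̃₊*. For every fixed λ > 0, η ∈ ℝ and k ∈ 𝕋 with k ≠ 0, one has lim_{ε→0+} γ·R(k)·Δ̃₁(λ,η,k)/δ̃_ε(λ,η,k) = 1/2. -/

import Mathlib

/-! Every entry of `D̃_ε` and of `Δ̃₁` is continuous in `ε`, so the quotient is continuous at
`ε = 0` once `δ̃₀ ≠ 0`, and the one-sided limit is its value there. At `ε = 0`, writing
`b = γR(k)` and `w = ω(k)`, one has `D̃₁ = 2b`, `D̃₂ = 2b + 2iw` and `D̃₊ = D̃₋ = −b`, whence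
`Δ̃₁ = 8bw²` and `δ̃ = 16b²w²`; for `0 < |k| < 1` both `b` and `w` are positive, so
`b·Δ̃₁/δ̃ = 1/2`. -/


noncomputable section

open Real Matrix Complex

/-- Dispersion relation `ω(k) = 2√α·sin²(πk)`. -/
def ω (α k : ℝ) : ℝ := 2 * Real.sqrt α * Real.sin (π * k) ^ 2

/-- `R(k) = 2·sin²(πk)·(1 + 2cos²(πk))`. -/
def R (k : ℝ) : ℝ := 2 * Real.sin (π * k) ^ 2 * (1 + 2 * Real.cos (π * k) ^ 2)

/-- `R′(k) = 2π·(sin(2πk) + sin(4πk))`. -/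
def R' (k : ℝ) : ℝ := 2 * π * (Real.sin (2 * π * k) + Real.sin (4 * π * k))

/-- `R″(k) = 4π²·(4cos²(2πk) + cos(2πk) − 2)`. -/
def R'' (k : ℝ) : ℝ := 4 * π ^ 2 * (4 * Real.cos (2 * π * k) ^ 2 + Real.cos (2 * π * k) - 2)

/-- `R_ε = R(k) + ((εη)²/8)·R″(k)`. -/
def Rε (ε η k : ℝ) : ℝ := R k + (ε * η) ^ 2 / 8 * R'' k

/-- `ω̄ = (ω(k + εη/2) + ω(k − εη/2))/2`. -/
def ωbar (α ε η k : ℝ) : ℝ := (ω α (k + ε * η / 2) + ω α (k - ε * η / 2)) / 2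

/-- `Δω = ω(k + εη/2) − ω(k − εη/2)`. -/
def Δω (α ε η k : ℝ) : ℝ := ω α (k + ε * η / 2) - ω α (k - ε * η / 2)

/-- `D̃₁ = ε²λ + 2γR_ε + i·Δω`. -/
def D₁ (α γ ε lam η k : ℝ) : ℂ :=
  (ε ^ 2 * lam + 2 * γ * Rε ε η k : ℝ) + Complex.I * (Δω α ε η k : ℝ)

/-- `D̃₂ = ε²λ + 2γR_ε + 2i·ω̄`. -/
def D₂ (α γ ε lam η k : ℝ) : ℂ :=
  (ε ^ 2 * lam + 2 * γ * Rε ε η k : ℝ) + 2 * Complex.I * (ωbar α ε η k : ℝ)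

/-- `D̃₊ = −γR_ε + (γε/2)·R′(k)·η`. -/
def Dplus (γ ε η k : ℝ) : ℝ := -γ * Rε ε η k + γ * ε / 2 * R' k * η

/-- `D̃₋ = −γR_ε − (γε/2)·R′(k)·η`. -/
def Dminus (γ ε η k : ℝ) : ℝ := -γ * Rε ε η k - γ * ε / 2 * R' k * η

/-- The 4×4 matrix `D̃_ε(λ,η,k)`. -/
def Dmat (α γ ε lam η k : ℝ) : Matrix (Fin 4) (Fin 4) ℂ :=
  !![D₁ α γ ε lam η k, (Dplus γ ε η k : ℂ), (Dminus γ ε η k : ℂ), 0;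
     (Dplus γ ε η k : ℂ), D₂ α γ ε lam η k, 0, (Dminus γ ε η k : ℂ);
     (Dminus γ ε η k : ℂ), 0, (starRingEnd ℂ) (D₂ α γ ε lam η k), (Dplus γ ε η k : ℂ);
     0, (Dminus γ ε η k : ℂ), (Dplus γ ε η k : ℂ), (starRingEnd ℂ) (D₁ α γ ε lam η k)]

/-- `δ̃_ε(λ,η,k) = det D̃_ε(λ,η,k)`. -/
def δdet (α γ ε lam η k : ℝ) : ℂ := (Dmat α γ ε lam η k).det

/-- Adjugate entry `d̃₁ = |D̃₂|²·D̃₁* − (D̃₊² + D̃₋²)·Re D̃₂ − i(D̃₊² − D̃₋²)·Im D̃₂`. -/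
def ad₁ (α γ ε lam η k : ℝ) : ℂ :=
  (Complex.normSq (D₂ α γ ε lam η k) : ℂ) * (starRingEnd ℂ) (D₁ α γ ε lam η k)
    - (((Dplus γ ε η k ^ 2 + Dminus γ ε η k ^ 2) * (D₂ α γ ε lam η k).re : ℝ) : ℂ)
    - Complex.I * (((Dplus γ ε η k ^ 2 - Dminus γ ε η k ^ 2) * (D₂ α γ ε lam η k).im : ℝ) : ℂ)

/-- Adjugate entry `d̃₂ = |D̃₁|²·D̃₂* − (D̃₊² + D̃₋²)·Re D̃₁ − i(D̃₊² − D̃₋²)·Im D̃₁`. -/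
def ad₂ (α γ ε lam η k : ℝ) : ℂ :=
  (Complex.normSq (D₁ α γ ε lam η k) : ℂ) * (starRingEnd ℂ) (D₂ α γ ε lam η k)
    - (((Dplus γ ε η k ^ 2 + Dminus γ ε η k ^ 2) * (D₁ α γ ε lam η k).re : ℝ) : ℂ)
    - Complex.I * (((Dplus γ ε η k ^ 2 - Dminus γ ε η k ^ 2) * (D₁ α γ ε lam η k).im : ℝ) : ℂ)

/-- Adjugate entry `d̃₋ = D̃₊·(D̃₊² − D̃₋²) − D̃₊·(D̃₁·D̃₂)*`. -/
def adMinus (α γ ε lam η k : ℝ) : ℂ :=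
  (Dplus γ ε η k : ℂ) * ((Dplus γ ε η k : ℂ) ^ 2 - (Dminus γ ε η k : ℂ) ^ 2)
    - (Dplus γ ε η k : ℂ) * (starRingEnd ℂ) (D₁ α γ ε lam η k * D₂ α γ ε lam η k)

/-- Adjugate entry `d̃₊ = −D̃₋·(D̃₁·D̃₂* + D̃₊² − D̃₋²)`. -/
def adPlus (α γ ε lam η k : ℝ) : ℂ :=
  -(Dminus γ ε η k : ℂ) *
    (D₁ α γ ε lam η k * (starRingEnd ℂ) (D₂ α γ ε lam η k)
      + (Dplus γ ε η k : ℂ) ^ 2 - (Dminus γ ε η k : ℂ) ^ 2)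

/-- Adjugate entry `d̃ₒ = 2·D̃₊·D̃₋·Re D̃₂`. -/
def adO (α γ ε lam η k : ℝ) : ℂ :=
  2 * (Dplus γ ε η k : ℂ) * (Dminus γ ε η k : ℂ) * ((D₂ α γ ε lam η k).re : ℂ)

/-- `Δ̃₁ = d̃₁ + d̃ₒ − d̃₋ − d̃₊*`. -/
def Δ₁ (α γ ε lam η k : ℝ) : ℂ :=
  ad₁ α γ ε lam η k + adO α γ ε lam η k - adMinus α γ ε lam η k
    - (starRingEnd ℂ) (adPlus α γ ε lam η k)

section ContinuityInε

variable (α γ lam η k : ℝ)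

@[fun_prop] lemma continuous_Rε : Continuous fun ε : ℝ => Rε ε η k := by
  unfold Rε; fun_prop

@[fun_prop] lemma continuous_ωbar : Continuous fun ε : ℝ => ωbar α ε η k := by
  unfold ωbar ω; fun_prop

@[fun_prop] lemma continuous_Δω : Continuous fun ε : ℝ => Δω α ε η k := by
  unfold Δω ω; fun_prop

@[fun_prop] lemma continuous_Dplus : Continuous fun ε : ℝ => Dplus γ ε η k := by
  unfold Dplus; fun_prop

@[fun_prop] lemma continuous_Dminus : Continuous fun ε : ℝ => Dminus γ ε η k := by
  unfold Dminus; fun_prop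

@[fun_prop] lemma continuous_D₁ : Continuous fun ε : ℝ => D₁ α γ ε lam η k := by
  unfold D₁; fun_prop

@[fun_prop] lemma continuous_D₂ : Continuous fun ε : ℝ => D₂ α γ ε lam η k := by
  unfold D₂; fun_prop

@[fun_prop] lemma continuous_Δ₁ : Continuous fun ε : ℝ => Δ₁ α γ ε lam η k := by
  unfold Δ₁ ad₁ adO adMinus adPlus
  fun_prop [Complex.continuous_normSq, Complex.continuous_re, Complex.continuous_im,
    Complex.continuous_conj]

@[fun_prop] lemma continuous_δdet : Continuous fun ε : ℝ => δdet α γ ε lam η k := by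
  refine (continuous_matrix fun i j => ?_).matrix_det
  fin_cases i <;> fin_cases j <;>
    simp only [Dmat, Fin.zero_eta, Fin.mk_one, Fin.reduceFinMk, Fin.isValue, of_apply, cons_val',
      cons_val, cons_val_zero, cons_val_one, cons_val_fin_one] <;>
    fun_prop [Complex.continuous_conj]

end ContinuityInε

theorem det_fin_four_of_antidiag_eq_zero {S : Type*} [CommRing S] (a b p m b' a' : S) :
    (!![a, p, m, 0; p, b, 0, m; m, 0, b', p; 0, m, p, a'] : Matrix (Fin 4) (Fin 4) S).det
      = a * b * b' * a' - p ^ 2 * (a * b + a' * b') - m ^ 2 * (a * b' + a' * b)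
        + (p ^ 2 - m ^ 2) ^ 2 := by
  rw [det_succ_row_zero]
  have h₁ : (1 : Fin 4).succAbove 2 = 3 := rfl
  have h₂ : (2 : Fin 4).succAbove 2 = 3 := rfl
  simp [Fin.sum_univ_succ, det_fin_three, h₁, h₂]
  ring

section AtZero

variable (α γ lam η k : ℝ)

@[simp] lemma Rε_zero : Rε 0 η k = R k := by simp [Rε]

@[simp] lemma ωbar_zero : ωbar α 0 η k = ω α k := by simp [ωbar]

@[simp] lemma Δω_zero : Δω α 0 η k = 0 := by simp [Δω]

@[simp] lemma Dplus_zero : Dplus γ 0 η k = -(γ * R k) := by simp [Dplus]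

@[simp] lemma Dminus_zero : Dminus γ 0 η k = -(γ * R k) := by simp [Dminus]

@[simp] lemma D₁_zero : D₁ α γ 0 lam η k = ((2 * (γ * R k) : ℝ) : ℂ) := by
  simp [D₁, mul_assoc]

@[simp] lemma D₂_zero : D₂ α γ 0 lam η k = ((2 * (γ * R k) : ℝ) : ℂ) + 2 * I * (ω α k : ℂ) := by
  simp [D₂, mul_assoc]

lemma Δ₁_zero : Δ₁ α γ 0 lam η k = ((8 * (γ * R k) * ω α k ^ 2 : ℝ) : ℂ) := by
  simp only [Δ₁, ad₁, adO, adMinus, adPlus, D₁_zero, D₂_zero, Dplus_zero, Dminus_zero]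
  generalize γ * R k = b
  generalize ω α k = w
  simp [Complex.ext_iff, Complex.normSq_apply, pow_two]
  ring

lemma δdet_zero : δdet α γ 0 lam η k = ((16 * (γ * R k) ^ 2 * ω α k ^ 2 : ℝ) : ℂ) := by
  simp only [δdet, Dmat, D₁_zero, D₂_zero, Dplus_zero, Dminus_zero,
    det_fin_four_of_antidiag_eq_zero]
  generalize γ * R k = b
  generalize ω α k = w
  apply Complex.ext <;> simp [pow_two, -mul_eq_zero] <;> ring

end AtZero

lemma sin_pi_mul_ne_zero_of_abs_lt_one {k : ℝ} (hk : |k| < 1) (hk0 : k ≠ 0) :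
    Real.sin (π * k) ≠ 0 := by
  rw [abs_lt] at hk
  rw [Ne, Real.sin_eq_zero_iff_of_lt_of_lt (by nlinarith [pi_pos]) (by nlinarith [pi_pos])]
  exact mul_ne_zero pi_ne_zero hk0

lemma R_pos {k : ℝ} (hs : Real.sin (π * k) ≠ 0) : 0 < R k := by
  unfold R; positivity

lemma ω_pos {α k : ℝ} (hα : 0 < α) (hs : Real.sin (π * k) ≠ 0) : 0 < ω α k := by
  unfold ω; positivity

theorem Delta1_limit_general (α γ : ℝ) (hα : 0 < α) (hγ : 0 < γ)
    (lam η k : ℝ)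
    (hk : k ∈ Set.Icc (-(1/2) : ℝ) (1/2)) (hk0 : k ≠ 0) :
    Filter.Tendsto
      (fun ε : ℝ => ((γ * R k : ℝ) : ℂ) * Δ₁ α γ ε lam η k / δdet α γ ε lam η k)
      (nhdsWithin 0 (Set.Ioi 0)) (nhds (1/2)) := by
  have hs : Real.sin (π * k) ≠ 0 :=
    sin_pi_mul_ne_zero_of_abs_lt_one (abs_le.2 hk |>.trans_lt (by norm_num)) hk0
  have hδ : δdet α γ 0 lam η k ≠ 0 := by
    rw [δdet_zero]
    have hb : 0 < γ * R k := mul_pos hγ (R_pos hs)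
    have hw : 0 < ω α k := ω_pos hα hs
    exact_mod_cast (by positivity : (0 : ℝ) < 16 * (γ * R k) ^ 2 * ω α k ^ 2).ne'
  have hval : ((γ * R k : ℝ) : ℂ) * Δ₁ α γ 0 lam η k / δdet α γ 0 lam η k = 1 / 2 := by
    rw [div_eq_iff hδ, Δ₁_zero, δdet_zero]
    push_cast; ring
  have hcont : ContinuousAt
      (fun ε : ℝ => ((γ * R k : ℝ) : ℂ) * Δ₁ α γ ε lam η k / δdet α γ ε lam η k) 0 := by
    fun_prop (disch := exact hδ)
  rw [← hval]
  exact hcont.tendsto.mono_left nhdsWithin_le_nhds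

theorem Delta1_limit (α γ : ℝ) (hα : 0 < α) (hγ : 0 < γ)
    (lam η k : ℝ) (hlam : 0 < lam)
    (hk : k ∈ Set.Icc (-(1/2) : ℝ) (1/2)) (hk0 : k ≠ 0) :
    Filter.Tendsto
      (fun ε : ℝ => ((γ * R k : ℝ) : ℂ) * Δ₁ α γ ε lam η k / δdet α γ ε lam η k)
      (nhdsWithin 0 (Set.Ioi 0)) (nhds (1/2)) :=
  Delta1_limit_general α γ hα hγ lam η k hk hk0
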